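/- Let k_1,...,k_t be positive integers summing to 2K with no subsequence summing to K. For any assignment of linear orders over {p,a,b} to weighted voters with these weights where every voter ranks p last, letting score(a) ≤ score(b) be the Borda scores of a and b, we have score(a) ≤ 3K−1 and score(b) ≤ 4K, and after adding a voter of weight 3K−1 voting p > a > b, p's score 6K−2 is at least the scores of both a and b, so p is a winner. -/

import Mathlib

/-- The three candidates of a 3-candidate election. -/
inductive Cand : Type
  | p | a | b
deriving DecidableEq

instance : Fintype Cand where
  elems := {Cand.p, Cand.a, Cand.b}
  complete := fun x => by cases x <;> simp

/-- Borda points (for weight 1) that the ballot `f` (a ranking: `f c = 0` means top)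
gives to candidate `c`. -/
def pts (f : Cand → Fin 3) (c : Cand) : ℕ := 2 - (f c : ℕ)

/-- The ballot `a > b > p`. -/
def ballotABP : Cand → Fin 3 := fun c => match c with | .a => 0 | .b => 1 | .p => 2

/-- The ballot `b > a > p`. -/
def ballotBAP : Cand → Fin 3 := fun c => match c with | .b => 0 | .a => 1 | .p => 2

/-- The ballot `p > a > b`. -/
def ballotPAB : Cand → Fin 3 := fun c => match c with | .p => 0 | .a => 1 | .b => 2

/-!
A voter of weight `w` ranking `p` last gives `2w` to one of `a`, `b` and `w` to the other.
So if `S` is the total weight of the voters putting `a` first, then `score a = 2K + S` and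
`score b = 4K - S`. Now `score a ≤ score b` means `S ≤ K`, and `S ≠ K` because no set of
voters has total weight `K`; hence `S ≤ K - 1`, which gives all the bounds.
-/

open Finset

section PLastElection

variable {ι : Type*} [Fintype ι] (w : ι → ℕ) (choice : ι → Bool)

def pLastScore (c : Cand) : ℕ :=
  ∑ i, w i * pts (if choice i then ballotABP else ballotBAP) c

theorem pLastScore_p : pLastScore w choice .p = 0 :=
  sum_eq_zero fun i _ => by cases choice i <;> rfl

theorem pLastScore_a :
    pLastScore w choice .a = ∑ i, w i + ∑ i with choice i, w i := by
  rw [sum_filter, ← sum_add_distrib]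
  refine sum_congr rfl fun i _ => ?_
  cases choice i <;> simp [pts, ballotABP, ballotBAP, mul_two]

theorem pLastScore_b :
    pLastScore w choice .b = ∑ i, w i + ∑ i with ¬choice i, w i := by
  rw [sum_filter, ← sum_add_distrib]
  refine sum_congr rfl fun i _ => ?_
  cases choice i <;> simp [pts, ballotABP, ballotBAP, mul_two]

end PLastElection

theorem stmt6_general (t K : ℕ) (k : Fin t → ℕ)
    (hsum : ∑ i, k i = 2 * K)
    (hnopart : ¬ ∃ S : Finset (Fin t), ∑ i ∈ S, k i = K)
    (choice : Fin t → Bool)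
    (hle : (∑ i, k i * pts (if choice i then ballotABP else ballotBAP) Cand.a) ≤
           ∑ i, k i * pts (if choice i then ballotABP else ballotBAP) Cand.b) :
    (∑ i, k i * pts (if choice i then ballotABP else ballotBAP) Cand.a) ≤ 3 * K - 1 ∧
    (∑ i, k i * pts (if choice i then ballotABP else ballotBAP) Cand.b) ≤ 4 * K ∧
    (∀ c : Cand,
        (∑ i, k i * pts (if choice i then ballotABP else ballotBAP) c) +
            (3 * K - 1) * pts ballotPAB c ≤
        (∑ i, k i * pts (if choice i then ballotABP else ballotBAP) Cand.p) +
            (3 * K - 1) * pts ballotPAB Cand.p) := by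
  change pLastScore k choice .a ≤ pLastScore k choice .b at hle
  change pLastScore k choice .a ≤ 3 * K - 1 ∧ pLastScore k choice .b ≤ 4 * K ∧
    ∀ c, pLastScore k choice c + (3 * K - 1) * pts ballotPAB c ≤
      pLastScore k choice .p + (3 * K - 1) * pts ballotPAB .p
  have hsplit : ∑ i with choice i, k i + ∑ i with ¬choice i, k i = 2 * K := by
    rw [sum_filter_add_sum_filter_not, hsum]
  have hhalf : ∑ i with choice i, k i ≠ K := fun h => hnopart ⟨_, h⟩
  have hlt : ∑ i with choice i, k i < K := by
    rw [pLastScore_a, pLastScore_b] at hle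
    omega
  refine ⟨by rw [pLastScore_a]; omega, by rw [pLastScore_b]; omega, ?_⟩
  rintro (_ | _ | _) <;>
    simp only [pLastScore_p, pLastScore_a, pLastScore_b, pts, ballotPAB,
      Fin.val_zero, Fin.val_one, Fin.val_two] <;>
    omega

/-- If the positive weights `k i` sum to `2K` and no subsequence sums to `K`, then for
any assignment of ballots ranking `p` last (`choice i = true` meaning voter `i` votes
`a > b > p`, else `b > a > p`) with `score a ≤ score b`, we have `score a ≤ 3K - 1`
and `score b ≤ 4K`; and after adding one voter of weight `3K - 1` voting `p > a > b`,
`p`'s score `6K - 2` is at least the score of every candidate, so `p` is a winner. -/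
theorem stmt6 (t K : ℕ) (hK : 0 < K) (k : Fin t → ℕ) (hpos : ∀ i, 0 < k i)
    (hsum : ∑ i, k i = 2 * K)
    (hnopart : ¬ ∃ S : Finset (Fin t), ∑ i ∈ S, k i = K)
    (choice : Fin t → Bool)
    (hle : (∑ i, k i * pts (if choice i then ballotABP else ballotBAP) Cand.a) ≤
           ∑ i, k i * pts (if choice i then ballotABP else ballotBAP) Cand.b) :
    (∑ i, k i * pts (if choice i then ballotABP else ballotBAP) Cand.a) ≤ 3 * K - 1 ∧
    (∑ i, k i * pts (if choice i then ballotABP else ballotBAP) Cand.b) ≤ 4 * K ∧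
    (∀ c : Cand,
        (∑ i, k i * pts (if choice i then ballotABP else ballotBAP) c) +
            (3 * K - 1) * pts ballotPAB c ≤
        (∑ i, k i * pts (if choice i then ballotABP else ballotBAP) Cand.p) +
            (3 * K - 1) * pts ballotPAB Cand.p) :=
  stmt6_general t K k hsum hnopart choice hle
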